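/- arXiv:1203.2898 — 4 statements merged into one kernel-verified Lean document; each statement's English description precedes it below -/
import Mathlib

section
/- For any positive integers s and m, the sum over all multi-indices α ∈ ℕˢ with |α| = m of ∏_{i=1}^s 1/(1+α_i)² is at most 20ˢ/(m+1)². -/
/-!
The sum is the coefficient `c_s(m)` of `X ^ m` in `(∑ₖ Xᵏ / (k + 1)²) ^ s`, so
`c_{s+1}(m) = ∑_{i+j=m} c_1(i) c_s(j)`. In each term one of `i + 1`, `j + 1` is at least
`(m + 1) / 2`, and the decay `1 / (k + 1)²` of that factor yields the factor `4 / (m + 1)²`;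
the other factor is then summed over `k ≤ m`, where `∑ₖ c_1(k) ≤ 2` and `∑ₖ c_s(k) ≤ 2 ^ s`.
Hence `c_{s+1}(m) ≤ 4 (2 ^ s + 2 · 20 ^ s) / (m + 1)² ≤ 20 ^ (s + 1) / (m + 1)²` by induction.
-/

open Finset Finset.Nat

theorem Finset.Nat.sum_antidiagonalTuple_succ {M : Type*} [AddCommMonoid M] (k n : ℕ)
    (f : (Fin (k + 1) → ℕ) → M) :
    ∑ x ∈ antidiagonalTuple (k + 1) n, f x =
      ∑ p ∈ antidiagonal n, ∑ x ∈ antidiagonalTuple k p.2, f (Fin.cons p.1 x) := by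
  rw [Finset.sum_sigma']
  refine Finset.sum_nbij' (fun x => ⟨(x 0, ∑ i, Fin.tail x i), Fin.tail x⟩)
    (fun q => Fin.cons q.1.1 q.2) ?_ ?_ ?_ ?_ ?_ <;>
  simp_all [mem_antidiagonalTuple, Fin.sum_univ_succ, Fin.tail]

theorem sum_range_one_div_one_add_sq_le_two (n : ℕ) :
    ∑ k ∈ range n, (1 : ℝ) / (1 + k) ^ 2 ≤ 2 := by
  have h := sum_Ioo_inv_sq_le (α := ℝ) 0 (n + 1)
  rw [← Finset.Ico_add_one_left_eq_Ioo, sum_Ico_eq_sum_range] at h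
  simpa [add_comm] using h

/-- The coefficient of `X ^ m` in `(∑ₖ f k • X ^ k) ^ s`. -/
noncomputable def convPow (f : ℕ → ℝ) (s m : ℕ) : ℝ :=
  ∑ α ∈ antidiagonalTuple s m, ∏ i, f (α i)

section convPow

variable {f : ℕ → ℝ}

theorem convPow_succ (s m : ℕ) :
    convPow f (s + 1) m = ∑ p ∈ antidiagonal m, f p.1 * convPow f s p.2 := by
  simp only [convPow, sum_antidiagonalTuple_succ, Fin.prod_univ_succ, Fin.cons_zero,
    Fin.cons_succ, mul_sum]

theorem convPow_nonneg (hf : ∀ k, 0 ≤ f k) (s m : ℕ) : 0 ≤ convPow f s m :=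
  sum_nonneg fun _ _ => prod_nonneg fun _ _ => hf _

theorem sum_range_convPow_le (hf : ∀ k, 0 ≤ f k) (s m : ℕ) :
    ∑ j ∈ range (m + 1), convPow f s j ≤ (∑ k ∈ range (m + 1), f k) ^ s := by
  classical
  have hdisj : (range (m + 1) : Set ℕ).PairwiseDisjoint (antidiagonalTuple s) := by
    intro i _ j _ hij
    refine disjoint_left.mpr fun α hi hj => hij ?_
    rw [mem_antidiagonalTuple] at hi hj
    rw [← hi, hj]
  have hsub : (range (m + 1)).biUnion (antidiagonalTuple s) ⊆
      Fintype.piFinset fun _ => range (m + 1) := by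
    intro α hα
    simp only [mem_biUnion, mem_range, mem_antidiagonalTuple] at hα
    obtain ⟨j, hj, rfl⟩ := hα
    simp only [Fintype.mem_piFinset, mem_range]
    intro i
    have := single_le_sum (fun i _ => Nat.zero_le (α i)) (mem_univ i)
    omega
  calc ∑ j ∈ range (m + 1), convPow f s j
      = ∑ α ∈ (range (m + 1)).biUnion (antidiagonalTuple s), ∏ i, f (α i) :=
        (sum_biUnion hdisj).symm
    _ ≤ ∑ α ∈ Fintype.piFinset fun _ => range (m + 1), ∏ i, f (α i) :=
        sum_le_sum_of_subset_of_nonneg hsub fun _ _ _ => prod_nonneg fun _ _ => hf _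
    _ = (∑ k ∈ range (m + 1), f k) ^ s := by
        rw [← prod_univ_sum, prod_const, card_univ, Fintype.card_fin]

end convPow

theorem le_four_mul_div_sq_of_le_div_sq {x a : ℝ} {k m : ℕ} (ha : 0 ≤ a)
    (hx : x ≤ a / (k + 1) ^ 2) (hkm : m + 1 ≤ 2 * (k + 1)) : x ≤ 4 * a / (m + 1) ^ 2 :=
  calc x ≤ a / (k + 1) ^ 2 := hx
    _ = 4 * a / (2 * (k + 1)) ^ 2 := by field_simp; ring
    _ ≤ 4 * a / (m + 1) ^ 2 := by gcongr; exact_mod_cast hkm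

theorem mul_le_of_le_div_sq {f g : ℕ → ℝ} {a b : ℝ} (hf0 : ∀ k, 0 ≤ f k) (hg0 : ∀ k, 0 ≤ g k)
    (hf : ∀ k, f k ≤ a / (k + 1) ^ 2) (hg : ∀ k, g k ≤ b / (k + 1) ^ 2) {i j m : ℕ}
    (hm : i + j = m) : f i * g j ≤ 4 * (a * g j + b * f i) / (m + 1) ^ 2 := by
  have ha : 0 ≤ a := by simpa using (hf0 0).trans (hf 0)
  have hb : 0 ≤ b := by simpa using (hg0 0).trans (hg 0)
  have hafg := mul_nonneg ha (hg0 j)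
  have hbf := mul_nonneg hb (hf0 i)
  rw [mul_add, add_div]
  rcases le_total i j with hij | hij
  · have hj := le_four_mul_div_sq_of_le_div_sq hb (hg j) (by omega : m + 1 ≤ 2 * (j + 1))
    calc f i * g j ≤ f i * (4 * b / (m + 1) ^ 2) := mul_le_mul_of_nonneg_left hj (hf0 i)
      _ = 4 * (b * f i) / (m + 1) ^ 2 := by ring
      _ ≤ _ := le_add_of_nonneg_left (by positivity)
  · have hi := le_four_mul_div_sq_of_le_div_sq ha (hf i) (by omega : m + 1 ≤ 2 * (i + 1))
    calc f i * g j ≤ 4 * a / (m + 1) ^ 2 * g j := mul_le_mul_of_nonneg_right hi (hg0 j)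
      _ = 4 * (a * g j) / (m + 1) ^ 2 := by ring
      _ ≤ _ := le_add_of_nonneg_right (by positivity)

theorem sum_antidiagonal_mul_le_of_le_div_sq {f g : ℕ → ℝ} {a b : ℝ} (hf0 : ∀ k, 0 ≤ f k)
    (hg0 : ∀ k, 0 ≤ g k) (hf : ∀ k, f k ≤ a / (k + 1) ^ 2) (hg : ∀ k, g k ≤ b / (k + 1) ^ 2)
    (m : ℕ) :
    ∑ p ∈ antidiagonal m, f p.1 * g p.2 ≤
      4 * (a * ∑ k ∈ range (m + 1), g k + b * ∑ k ∈ range (m + 1), f k) / (m + 1) ^ 2 := by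
  have hfst : ∑ p ∈ antidiagonal m, f p.1 = ∑ k ∈ range (m + 1), f k :=
    sum_antidiagonal_eq_sum_range_succ_mk (fun p => f p.1) m
  have hsnd : ∑ p ∈ antidiagonal m, g p.2 = ∑ k ∈ range (m + 1), g k := by
    rw [← sum_antidiagonal_swap]
    exact sum_antidiagonal_eq_sum_range_succ_mk (fun p => g p.1) m
  calc ∑ p ∈ antidiagonal m, f p.1 * g p.2
      ≤ ∑ p ∈ antidiagonal m, 4 * (a * g p.2 + b * f p.1) / (m + 1) ^ 2 :=
        sum_le_sum fun p hp => mul_le_of_le_div_sq hf0 hg0 hf hg (mem_antidiagonal.mp hp)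
    _ = _ := by
        rw [← sum_div, ← mul_sum, sum_add_distrib, ← mul_sum, ← mul_sum, hfst, hsnd]

theorem convPow_one_div_one_add_sq_le (s m : ℕ) :
    convPow (fun k => 1 / (1 + k) ^ 2) s m ≤ 20 ^ s / ((m : ℝ) + 1) ^ 2 := by
  induction s generalizing m with
  | zero => cases m <;> simp [convPow]; positivity
  | succ s ih =>
    have hw0 : ∀ k : ℕ, (0 : ℝ) ≤ 1 / (1 + k) ^ 2 := fun k => by positivity
    have hw : ∀ k : ℕ, (1 : ℝ) / (1 + k) ^ 2 ≤ 1 / (k + 1) ^ 2 := fun k => by rw [add_comm]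
    rw [convPow_succ]
    refine (sum_antidiagonal_mul_le_of_le_div_sq hw0 (convPow_nonneg hw0 s) hw ih m).trans ?_
    gcongr ?_ / _
    have hsum := sum_range_one_div_one_add_sq_le_two (m + 1)
    have hconv : ∑ k ∈ range (m + 1), convPow (fun k => 1 / (1 + k) ^ 2) s k ≤ 2 ^ s :=
      (sum_range_convPow_le hw0 s m).trans (pow_le_pow_left₀ (sum_nonneg fun k _ => hw0 k) hsum s)
    have h₂₀ : (2 : ℝ) ^ s ≤ 20 ^ s := pow_le_pow_left₀ (by norm_num) (by norm_num) s
    calc 4 * (1 * ∑ k ∈ range (m + 1), convPow (fun k => 1 / (1 + k) ^ 2) s k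
          + 20 ^ s * ∑ k ∈ range (m + 1), 1 / (1 + (k : ℝ)) ^ 2)
        ≤ 4 * (1 * 2 ^ s + 20 ^ s * 2) := by gcongr
      _ ≤ 12 * 20 ^ s := by linarith
      _ ≤ 20 ^ (s + 1) := by
        rw [pow_succ, mul_comm]; exact mul_le_mul_of_nonneg_left (by norm_num) (by positivity)

theorem stmt_2_general (s m : ℕ) :
    ∑ α ∈ Finset.Nat.antidiagonalTuple s m,
        ∏ i : Fin s, (1 : ℝ) / ((1 : ℝ) + (α i : ℝ)) ^ 2 ≤
      20 ^ s / ((m : ℝ) + 1) ^ 2 :=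
  convPow_one_div_one_add_sq_le s m

theorem stmt_2 (s m : ℕ) (hs : 1 ≤ s) (hm : 1 ≤ m) :
    ∑ α ∈ Finset.Nat.antidiagonalTuple s m,
        ∏ i : Fin s, (1 : ℝ) / ((1 : ℝ) + (α i : ℝ)) ^ 2 ≤
      20 ^ s / ((m : ℝ) + 1) ^ 2 :=
  stmt_2_general s m
end

section
/- For all natural numbers k, m₁, m₂ and all L > 0, V > 0, the sum ∑_{j=0}^k C(k,j) · V_{m₁,j} · V_{m₂,k-j} is at most 16 · V · V_{m₁+m₂,k}, where V_{m,j} := m! j! L^j V^{j+1} / ((m+1)²(j+1)²). -/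
/-
After factoring out everything that does not depend on `j`, the `j`-th term is
`m₁! m₂! / ((m₁+1)² (m₂+1)²) · k! L^k V^(k+2) / ((j+1)² (k-j+1)²)`.
Writing `a = j+1`, `b = k-j+1`, one has `1/(a²b²) ≤ 2/(a+b)² · (1/a² + 1/b²)`, so the sum over `j`
is at most `2/(k+2)² · 2 · ∑ 1/(j+1)² ≤ 8/(k+2)²`. Finally `m ↦ m!/(m+1)²` is supermultiplicative,
because `m₁! m₂! ≤ (m₁+m₂)!` and `m₁+m₂+1 ≤ (m₁+1)(m₂+1)`.
-/

open Finset
open scoped Nat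

noncomputable def factorialDivSuccSq (n : ℕ) : ℝ := n ! / ((n : ℝ) + 1) ^ 2

lemma factorialDivSuccSq_pos (n : ℕ) : 0 < factorialDivSuccSq n := by
  unfold factorialDivSuccSq
  positivity

lemma factorialDivSuccSq_mul_le (m n : ℕ) :
    factorialDivSuccSq m * factorialDivSuccSq n ≤ factorialDivSuccSq (m + n) := by
  have hfac : (m ! : ℝ) * n ! ≤ (m + n)! := by
    exact_mod_cast Nat.le_of_dvd (Nat.factorial_pos _) (Nat.factorial_mul_factorial_dvd_factorial_add m n)
  have hsucc : ((m + n : ℕ) : ℝ) + 1 ≤ ((m : ℝ) + 1) * ((n : ℝ) + 1) := by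
    push_cast
    nlinarith [mul_nonneg (m.cast_nonneg : (0 : ℝ) ≤ m) (n.cast_nonneg : (0 : ℝ) ≤ n)]
  unfold factorialDivSuccSq
  rw [div_mul_div_comm, ← mul_pow]
  gcongr

lemma sum_range_inv_succ_sq_le_two (n : ℕ) : ∑ j ∈ range (n + 1), (((j : ℝ) + 1) ^ 2)⁻¹ ≤ 2 := by
  have h := sum_Ioo_inv_sq_le (α := ℝ) 0 (n + 2)
  rw [← Ico_add_one_left_eq_Ioo, ← sum_Ico_add' (fun i : ℕ => ((i : ℝ) ^ 2)⁻¹) 0 (n + 1) 1,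
    ← range_eq_Ico] at h
  simpa using h

lemma inv_mul_sq_le {a b : ℝ} (ha : 0 < a) (hb : 0 < b) :
    ((a * b) ^ 2)⁻¹ ≤ 2 / (a + b) ^ 2 * ((a ^ 2)⁻¹ + (b ^ 2)⁻¹) := by
  rw [inv_eq_one_div, inv_eq_one_div, inv_eq_one_div, div_add_div _ _ (by positivity) (by positivity),
    div_mul_div_comm, div_le_div_iff₀ (by positivity) (by positivity)]
  nlinarith [mul_nonneg (sq_nonneg (a * b)) (sq_nonneg (a - b))]

lemma sum_range_inv_mul_sq_le (k : ℕ) :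
    ∑ j ∈ range (k + 1), ((((j : ℝ) + 1) * (((k - j : ℕ) : ℝ) + 1)) ^ 2)⁻¹ ≤ 8 / ((k : ℝ) + 2) ^ 2 := by
  have hreflect : ∑ j ∈ range (k + 1), ((((k - j : ℕ) : ℝ) + 1) ^ 2)⁻¹
      = ∑ j ∈ range (k + 1), (((j : ℝ) + 1) ^ 2)⁻¹ := by
    simpa using sum_range_reflect (fun j => (((j : ℝ) + 1) ^ 2)⁻¹) (k + 1)
  calc ∑ j ∈ range (k + 1), ((((j : ℝ) + 1) * (((k - j : ℕ) : ℝ) + 1)) ^ 2)⁻¹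
      ≤ ∑ j ∈ range (k + 1),
          2 / ((k : ℝ) + 2) ^ 2 * ((((j : ℝ) + 1) ^ 2)⁻¹ + ((((k - j : ℕ) : ℝ) + 1) ^ 2)⁻¹) := by
        refine sum_le_sum fun j hj => ?_
        have hsum : ((j : ℝ) + 1) + (((k - j : ℕ) : ℝ) + 1) = k + 2 := by
          rw [Nat.cast_sub (Nat.lt_succ_iff.mp (mem_range.mp hj))]
          ring
        rw [← hsum]
        exact inv_mul_sq_le (by positivity) (by positivity)
    _ = 2 / ((k : ℝ) + 2) ^ 2 * (2 * ∑ j ∈ range (k + 1), (((j : ℝ) + 1) ^ 2)⁻¹) := by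
        rw [← mul_sum, sum_add_distrib, hreflect, two_mul]
    _ ≤ 2 / ((k : ℝ) + 2) ^ 2 * (2 * 2) := by
        gcongr
        exact sum_range_inv_succ_sq_le_two k
    _ = 8 / ((k : ℝ) + 2) ^ 2 := by ring

lemma choose_mul_factorialDivSuccSq_mul {k j : ℕ} (hj : j ≤ k) :
    (k.choose j : ℝ) * factorialDivSuccSq j * factorialDivSuccSq (k - j)
      = k ! * ((((j : ℝ) + 1) * (((k - j : ℕ) : ℝ) + 1)) ^ 2)⁻¹ := by
  have hfac : (k.choose j : ℝ) * j ! * (k - j)! = k ! := by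
    exact_mod_cast Nat.choose_mul_factorial_mul_factorial hj
  unfold factorialDivSuccSq
  rw [← hfac]
  field_simp

lemma sum_choose_mul_factorialDivSuccSq_le (k : ℕ) :
    ∑ j ∈ range (k + 1), (k.choose j : ℝ) * factorialDivSuccSq j * factorialDivSuccSq (k - j)
      ≤ 8 * factorialDivSuccSq k := by
  rw [sum_congr rfl fun j hj =>
    choose_mul_factorialDivSuccSq_mul (Nat.lt_succ_iff.mp (mem_range.mp hj)), ← mul_sum]
  calc (k ! : ℝ) * ∑ j ∈ range (k + 1), ((((j : ℝ) + 1) * (((k - j : ℕ) : ℝ) + 1)) ^ 2)⁻¹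
      ≤ k ! * (8 / ((k : ℝ) + 2) ^ 2) := by
        gcongr
        exact sum_range_inv_mul_sq_le k
    _ ≤ 8 * factorialDivSuccSq k := by
        unfold factorialDivSuccSq
        rw [mul_div_left_comm]
        gcongr
        linarith

theorem stmt_3 (k m₁ m₂ : ℕ) (L V : ℝ) (hL : 0 < L) (hV : 0 < V)
    (Vf : ℕ → ℕ → ℝ)
    (hVf : ∀ m j : ℕ, Vf m j =
      ((Nat.factorial m : ℝ) * (Nat.factorial j : ℝ) /
          (((m : ℝ) + 1) ^ 2 * ((j : ℝ) + 1) ^ 2)) * L ^ j * V ^ (j + 1)) :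
    ∑ j ∈ Finset.range (k + 1), (Nat.choose k j : ℝ) * Vf m₁ j * Vf m₂ (k - j) ≤
      16 * V * Vf (m₁ + m₂) k := by
  have hw : ∀ m j, Vf m j = factorialDivSuccSq m * factorialDivSuccSq j * L ^ j * V ^ (j + 1) :=
    fun m j => by rw [hVf, factorialDivSuccSq, factorialDivSuccSq, div_mul_div_comm]
  have hterm : ∀ j ∈ range (k + 1), (k.choose j : ℝ) * Vf m₁ j * Vf m₂ (k - j)
      = factorialDivSuccSq m₁ * factorialDivSuccSq m₂ * L ^ k * V ^ (k + 2) *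
          ((k.choose j : ℝ) * factorialDivSuccSq j * factorialDivSuccSq (k - j)) := by
    intro j hj
    have hjk : j ≤ k := Nat.lt_succ_iff.mp (mem_range.mp hj)
    have hLk : L ^ k = L ^ j * L ^ (k - j) := by rw [← pow_add, Nat.add_sub_cancel' hjk]
    have hVk : V ^ (k + 2) = V ^ (j + 1) * V ^ (k - j + 1) := by rw [← pow_add]; congr 1; omega
    rw [hw, hw, hLk, hVk]
    ring
  have hw₁ := factorialDivSuccSq_pos m₁
  have hw₂ := factorialDivSuccSq_pos m₂
  have hwk := factorialDivSuccSq_pos k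
  have hw₁₂ := factorialDivSuccSq_pos (m₁ + m₂)
  have hVf_pos : 0 < Vf (m₁ + m₂) k := by rw [hw]; positivity
  calc ∑ j ∈ range (k + 1), (k.choose j : ℝ) * Vf m₁ j * Vf m₂ (k - j)
      = factorialDivSuccSq m₁ * factorialDivSuccSq m₂ * L ^ k * V ^ (k + 2) *
          ∑ j ∈ range (k + 1), (k.choose j : ℝ) * factorialDivSuccSq j * factorialDivSuccSq (k - j) := by
        rw [sum_congr rfl hterm, mul_sum]
    _ ≤ factorialDivSuccSq m₁ * factorialDivSuccSq m₂ * L ^ k * V ^ (k + 2) *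
          (8 * factorialDivSuccSq k) := by
        gcongr
        exact sum_choose_mul_factorialDivSuccSq_le k
    _ ≤ factorialDivSuccSq (m₁ + m₂) * L ^ k * V ^ (k + 2) * (8 * factorialDivSuccSq k) := by
        gcongr
        exact factorialDivSuccSq_mul_le m₁ m₂
    _ = 8 * V * Vf (m₁ + m₂) k := by
        rw [hw]
        ring
    _ ≤ 16 * V * Vf (m₁ + m₂) k := by gcongr; norm_num
end

section
/- For any natural number k ≥ 1, ∑_{j=0}^k 1/((j+1)²(k-j+1)²) ≤ 2 · (π²/6) · 4/k². -/
/-!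
Writing `a = j + 1` and `b = k - j + 1`, so that `a + b = k + 2`, the identity
`1 / (a b) = (1 / a + 1 / b) / (a + b)` and `(x + y)² ≤ 2 (x² + y²)` give
`1 / (a² b²) ≤ 2 / (k + 2)² · (1 / a² + 1 / b²)`. Summing over `j`, the two halves are the same
partial sum of `∑ 1 / n²` (one read backwards), so the whole sum is at most
`4 / (k + 2)² · π² / 6`.
-/

open Finset Real

lemma one_div_sq_mul_sq_le {a b : ℝ} (ha : 0 < a) (hb : 0 < b) :
    1 / (a ^ 2 * b ^ 2) ≤ 2 / (a + b) ^ 2 * (1 / a ^ 2 + 1 / b ^ 2) := by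
  have hab : 0 < a + b := add_pos ha hb
  have h_inv : 1 / (a * b) = (1 / a + 1 / b) / (a + b) := by
    field_simp
    ring
  calc 1 / (a ^ 2 * b ^ 2) = (1 / a + 1 / b) ^ 2 / (a + b) ^ 2 := by
        rw [← div_pow, ← h_inv, div_pow, one_pow, mul_pow]
    _ ≤ 2 * (1 / a ^ 2 + 1 / b ^ 2) / (a + b) ^ 2 := by
        gcongr
        rw [← one_div_pow, ← one_div_pow]
        exact add_sq_le
    _ = 2 / (a + b) ^ 2 * (1 / a ^ 2 + 1 / b ^ 2) := by ring

lemma sum_range_succ_comp_natCast_sub (g : ℝ → ℝ) (n : ℕ) :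
    ∑ j ∈ range (n + 1), g ((n : ℝ) - j) = ∑ j ∈ range (n + 1), g j := by
  rw [← sum_range_reflect]
  refine sum_congr rfl fun j hj => ?_
  rw [add_tsub_cancel_right, Nat.cast_sub (Nat.lt_succ_iff.mp (mem_range.mp hj)), sub_sub_cancel]

lemma sum_range_one_div_succ_sq_le (m : ℕ) :
    ∑ j ∈ range m, (1 : ℝ) / ((j : ℝ) + 1) ^ 2 ≤ π ^ 2 / 6 := by
  have h_shift : ∑ j ∈ range m, (1 : ℝ) / ((j : ℝ) + 1) ^ 2
      = ∑ n ∈ range (m + 1), (1 : ℝ) / (n : ℝ) ^ 2 := by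
    simp [sum_range_succ']
  rw [h_shift]
  exact sum_le_hasSum _ (fun n _ => by positivity) hasSum_zeta_two

lemma sum_range_one_div_sq_mul_sq_le (k : ℕ) :
    ∑ j ∈ range (k + 1), (1 : ℝ) / (((j : ℝ) + 1) ^ 2 * ((k : ℝ) - j + 1) ^ 2) ≤
      4 / ((k : ℝ) + 2) ^ 2 * (π ^ 2 / 6) := by
  set S := ∑ j ∈ range (k + 1), (1 : ℝ) / ((j : ℝ) + 1) ^ 2
  have h_term : ∀ j ∈ range (k + 1),
      (1 : ℝ) / (((j : ℝ) + 1) ^ 2 * ((k : ℝ) - j + 1) ^ 2) ≤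
        2 / ((k : ℝ) + 2) ^ 2 * (1 / ((j : ℝ) + 1) ^ 2 + 1 / ((k : ℝ) - j + 1) ^ 2) := by
    intro j hj
    have hjk : (j : ℝ) ≤ k := by exact_mod_cast Nat.lt_succ_iff.mp (mem_range.mp hj)
    have h_sum : ((j : ℝ) + 1) + ((k : ℝ) - j + 1) = (k : ℝ) + 2 := by ring
    rw [← h_sum]
    exact one_div_sq_mul_sq_le (by positivity) (by linarith)
  have h_reflect : ∑ j ∈ range (k + 1), (1 : ℝ) / ((k : ℝ) - j + 1) ^ 2 = S :=
    sum_range_succ_comp_natCast_sub (fun x => 1 / (x + 1) ^ 2) k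
  calc _ ≤ ∑ j ∈ range (k + 1),
        2 / ((k : ℝ) + 2) ^ 2 * (1 / ((j : ℝ) + 1) ^ 2 + 1 / ((k : ℝ) - j + 1) ^ 2) :=
        sum_le_sum h_term
    _ = 4 / ((k : ℝ) + 2) ^ 2 * S := by
        rw [← mul_sum, sum_add_distrib, h_reflect]
        ring
    _ ≤ 4 / ((k : ℝ) + 2) ^ 2 * (π ^ 2 / 6) := by
        gcongr
        exact sum_range_one_div_succ_sq_le _

theorem stmt_4 (k : ℕ) (hk : 1 ≤ k) :
    ∑ j ∈ Finset.range (k + 1),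
        (1 : ℝ) / (((j : ℝ) + 1) ^ 2 * ((k : ℝ) - (j : ℝ) + 1) ^ 2) ≤
      2 * (Real.pi ^ 2 / 6) * (4 / (k : ℝ) ^ 2) := by
  have hk_pos : (0 : ℝ) < k := by exact_mod_cast hk
  have h_coeff : 4 / ((k : ℝ) + 2) ^ 2 ≤ 2 * (4 / (k : ℝ) ^ 2) := by
    have h_mono : 4 / ((k : ℝ) + 2) ^ 2 ≤ 4 / (k : ℝ) ^ 2 := by gcongr; linarith
    linarith [show 0 < 4 / (k : ℝ) ^ 2 by positivity]
  calc _ ≤ 4 / ((k : ℝ) + 2) ^ 2 * (π ^ 2 / 6) := sum_range_one_div_sq_mul_sq_le k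
    _ ≤ 2 * (4 / (k : ℝ) ^ 2) * (π ^ 2 / 6) := by gcongr
    _ = 2 * (π ^ 2 / 6) * (4 / (k : ℝ) ^ 2) := by ring
end

section
/- Let γ(L) := sup_k ∑_{s=2}^{k+1} (2s)^{2(M-1)} 1600^s L^{1-s} (k+1)²(M+1)²/((k+2-s)²(M+s)²) for a fixed natural number M ≥ 1. Then γ(L) is finite for L large enough, γ is decreasing in L, and γ(L) → 0 as L → +∞. -/
open Filter
open Finset

-- s^(2M) ≤ (2M)! * 3^s
lemma aux_pow_le_fact (n s : ℕ) : (s : ℝ) ^ n ≤ n.factorial * 3 ^ s := by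
  have h1 : (s : ℝ) ^ n / n.factorial ≤ Real.exp s :=
    Real.pow_div_factorial_le_exp (x := (s:ℝ)) (by positivity) n
  have h2 : Real.exp (s : ℝ) ≤ 3 ^ s := by
    have : Real.exp (s : ℝ) = Real.exp 1 ^ s := by
      rw [← Real.exp_nat_mul]; norm_num
    rw [this]
    exact pow_le_pow_left₀ (Real.exp_pos 1).le
      (by linarith [Real.exp_one_lt_d9.le]) s
  have hf : (0:ℝ) < n.factorial := by positivity
  rw [div_le_iff₀ hf] at h1
  calc (s:ℝ)^n ≤ Real.exp s * n.factorial := h1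
    _ ≤ 3^s * n.factorial := by
        apply mul_le_mul_of_nonneg_right h2 hf.le
    _ = n.factorial * 3^s := by ring

-- key per-term bound
lemma aux_term_le (M : ℕ) (hM : 1 ≤ M) (k s : ℕ) (hs2 : 2 ≤ s) (hsk : s ≤ k + 1)
    (L : ℝ) (hL : 9600 ≤ L) :
    (2 * (s : ℝ)) ^ (2 * (M - 1)) * 1600 ^ s * L ^ ((1 : ℤ) - (s : ℤ)) *
      (((k : ℝ) + 1) ^ 2 * ((M : ℝ) + 1) ^ 2) /
        (((k + 2 - s : ℕ) : ℝ) ^ 2 * ((M : ℝ) + (s : ℝ)) ^ 2)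
    ≤ (4 : ℝ) ^ (M - 1) * (2 * M).factorial * 4800 ^ 2 / L * (4 * (1 / 2 : ℝ) ^ s) := by
  have hL0 : (0 : ℝ) < L := by linarith
  -- L^(1-s) = L / L^s
  have hz : L ^ ((1 : ℤ) - (s : ℤ)) = L / L ^ s := by
    rw [zpow_sub₀ hL0.ne', zpow_one, zpow_natCast]
  -- fraction bound
  have hfrac : (((k : ℝ) + 1) ^ 2 * ((M : ℝ) + 1) ^ 2) /
      (((k + 2 - s : ℕ) : ℝ) ^ 2 * ((M : ℝ) + (s : ℝ)) ^ 2) ≤ (s : ℝ) ^ 2 := by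
    have ht1 : 1 ≤ k + 2 - s := by omega
    have hden : (0 : ℝ) < ((k + 2 - s : ℕ) : ℝ) ^ 2 * ((M : ℝ) + (s : ℝ)) ^ 2 := by
      have hc : (0 : ℝ) < ((k + 2 - s : ℕ) : ℝ) := by
        have : (1 : ℝ) ≤ ((k + 2 - s : ℕ) : ℝ) := by exact_mod_cast ht1
        linarith
      have hm : (0 : ℝ) < (M : ℝ) + s := by positivity
      exact mul_pos (pow_pos hc 2) (pow_pos hm 2)
    rw [div_le_iff₀ hden]
    have hks : (k : ℝ) + 1 ≤ (s : ℝ) * ((k + 2 - s : ℕ) : ℝ) := by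
      have : k + 1 ≤ s * (k + 2 - s) := by nlinarith [Nat.sub_add_cancel (by omega : s ≤ k + 2)]
      exact_mod_cast this
    have hm1 : ((M : ℝ) + 1) ≤ (M : ℝ) + s := by
      have : (1:ℝ) ≤ (s:ℝ) := by exact_mod_cast (by omega : 1 ≤ s)
      linarith
    have a1 : ((k:ℝ)+1)^2 ≤ ((s:ℝ)*((k + 2 - s : ℕ) : ℝ))^2 :=
      pow_le_pow_left₀ (by positivity) hks 2
    have a2 : ((M:ℝ)+1)^2 ≤ ((M:ℝ)+(s:ℝ))^2 :=
      pow_le_pow_left₀ (by positivity) hm1 2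
    calc ((k:ℝ)+1)^2 * ((M:ℝ)+1)^2
        ≤ ((s:ℝ)*((k + 2 - s : ℕ) : ℝ))^2 * ((M:ℝ)+(s:ℝ))^2 :=
          mul_le_mul a1 a2 (by positivity) (by positivity)
      _ = (s:ℝ)^2 * (((k + 2 - s : ℕ) : ℝ)^2 * ((M:ℝ)+(s:ℝ))^2) := by ring
  -- combine powers: (2s)^(2(M-1)) * s^2 = 4^(M-1) * s^(2M)
  have hpow : (2 * (s : ℝ)) ^ (2 * (M - 1)) * (s : ℝ) ^ 2 = 4 ^ (M - 1) * (s : ℝ) ^ (2 * M) := by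
    have e1 : (2:ℝ)^(2*(M-1)) = 4^(M-1) := by rw [pow_mul]; norm_num
    rw [mul_pow, mul_assoc, ← pow_add, e1]
    congr 2
    omega
  have hA : (0:ℝ) ≤ (2 * (s : ℝ)) ^ (2 * (M - 1)) * 1600 ^ s * L ^ ((1 : ℤ) - (s : ℤ)) := by
    positivity
  calc (2 * (s : ℝ)) ^ (2 * (M - 1)) * 1600 ^ s * L ^ ((1 : ℤ) - (s : ℤ)) *
      (((k : ℝ) + 1) ^ 2 * ((M : ℝ) + 1) ^ 2) /
        (((k + 2 - s : ℕ) : ℝ) ^ 2 * ((M : ℝ) + (s : ℝ)) ^ 2)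
      = (2 * (s : ℝ)) ^ (2 * (M - 1)) * 1600 ^ s * L ^ ((1 : ℤ) - (s : ℤ)) *
        ((((k : ℝ) + 1) ^ 2 * ((M : ℝ) + 1) ^ 2) /
          (((k + 2 - s : ℕ) : ℝ) ^ 2 * ((M : ℝ) + (s : ℝ)) ^ 2)) := by ring
    _ ≤ (2 * (s : ℝ)) ^ (2 * (M - 1)) * 1600 ^ s * L ^ ((1 : ℤ) - (s : ℤ)) * (s : ℝ) ^ 2 :=
        mul_le_mul_of_nonneg_left hfrac hA
    _ = 4 ^ (M - 1) * (s : ℝ) ^ (2 * M) * (1600 ^ s * (L / L ^ s)) := by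
        rw [hz, ← hpow]; ring
    _ ≤ 4 ^ (M - 1) * ((2 * M).factorial * 3 ^ s) * (1600 ^ s * (L / L ^ s)) := by
        apply mul_le_mul_of_nonneg_right (mul_le_mul_of_nonneg_left
          (aux_pow_le_fact (2 * M) s) (by positivity))
        positivity
    _ = 4 ^ (M - 1) * (2 * M).factorial * (L * (4800 / L) ^ s) := by
        have h48 : (4800:ℝ)^s = 3^s*1600^s := by rw [← mul_pow]; norm_num
        rw [div_pow, h48]
        field_simp
    _ ≤ 4 ^ (M - 1) * (2 * M).factorial * (L * ((4800 / L) ^ 2 * (1 / 2 : ℝ) ^ (s - 2))) := by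
        have h1 : (4800 / L : ℝ) ^ s = (4800 / L) ^ 2 * (4800 / L) ^ (s - 2) := by
          rw [← pow_add]; congr 1; omega
        have h2 : (4800 / L : ℝ) ^ (s - 2) ≤ (1 / 2 : ℝ) ^ (s - 2) := by
          apply pow_le_pow_left₀ (by positivity)
          rw [div_le_div_iff₀ hL0 (by norm_num)]; linarith
        rw [h1]
        have := mul_le_mul_of_nonneg_left h2 (by positivity : (0:ℝ) ≤ (4800 / L) ^ 2)
        apply mul_le_mul_of_nonneg_left _ (by positivity)
        exact mul_le_mul_of_nonneg_left this hL0.le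
    _ = 4 ^ (M - 1) * (2 * M).factorial * 4800 ^ 2 / L * (4 * (1 / 2 : ℝ) ^ s) := by
        have h3 : (1 / 2 : ℝ) ^ s = (1 / 2) ^ (s - 2) * (1 / 2) ^ 2 := by
          rw [← pow_add]; congr 1; omega
        rw [h3]
        field_simp
        ring

theorem stmt_18 (M : ℕ) (hM : 1 ≤ M)
    (S : ℕ → ℝ → ℝ)
    (hS : ∀ (k : ℕ) (L : ℝ), S k L =
      ∑ s ∈ Finset.Icc 2 (k + 1),
        (2 * (s : ℝ)) ^ (2 * (M - 1)) * 1600 ^ s * L ^ ((1 : ℤ) - (s : ℤ)) *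
          (((k : ℝ) + 1) ^ 2 * ((M : ℝ) + 1) ^ 2) /
            (((k + 2 - s : ℕ) : ℝ) ^ 2 * ((M : ℝ) + (s : ℝ)) ^ 2))
    (γ : ℝ → ℝ) (hγ : ∀ L : ℝ, γ L = ⨆ k : ℕ, S k L) :
    ∃ L₀ : ℝ, 0 < L₀ ∧
      (∀ L : ℝ, L₀ ≤ L → BddAbove (Set.range fun k : ℕ => S k L)) ∧
      AntitoneOn γ (Set.Ici L₀) ∧
      Tendsto γ atTop (nhds 0) := by
  set C : ℝ := (4 : ℝ) ^ (M - 1) * (2 * M).factorial * 4800 ^ 2 with hCdef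
  have hCpos : 0 < C := by positivity
  -- key bound on S
  have hkey : ∀ k : ℕ, ∀ L : ℝ, 9600 ≤ L → S k L ≤ 8 * C / L := by
    intro k L hL
    have hL0 : (0 : ℝ) < L := by linarith
    rw [hS]
    calc ∑ s ∈ Finset.Icc 2 (k + 1),
        (2 * (s : ℝ)) ^ (2 * (M - 1)) * 1600 ^ s * L ^ ((1 : ℤ) - (s : ℤ)) *
          (((k : ℝ) + 1) ^ 2 * ((M : ℝ) + 1) ^ 2) /
            (((k + 2 - s : ℕ) : ℝ) ^ 2 * ((M : ℝ) + (s : ℝ)) ^ 2)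
        ≤ ∑ s ∈ Finset.Icc 2 (k + 1), C / L * (4 * (1 / 2 : ℝ) ^ s) := by
          apply Finset.sum_le_sum
          intro s hs
          rw [Finset.mem_Icc] at hs
          exact aux_term_le M hM k s hs.1 hs.2 L hL
      _ = C / L * 4 * ∑ s ∈ Finset.Icc 2 (k + 1), (1 / 2 : ℝ) ^ s := by
          rw [Finset.mul_sum]; apply Finset.sum_congr rfl; intro s _; ring
      _ ≤ C / L * 4 * 2 := by
          apply mul_le_mul_of_nonneg_left _ (by positivity)
          calc ∑ s ∈ Finset.Icc 2 (k + 1), (1 / 2 : ℝ) ^ s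
              ≤ ∑ s ∈ Finset.range (k + 2), (1 / 2 : ℝ) ^ s := by
                apply Finset.sum_le_sum_of_subset_of_nonneg
                · intro s hs
                  rw [Finset.mem_Icc] at hs
                  exact Finset.mem_range.2 (by omega)
                · intro s _ _; positivity
            _ ≤ 2 := sum_geometric_two_le _
      _ = 8 * C / L := by ring
  -- nonnegativity of S
  have hSnn : ∀ k : ℕ, ∀ L : ℝ, 0 < L → 0 ≤ S k L := by
    intro k L hL0
    rw [hS]
    apply Finset.sum_nonneg
    intro s _
    positivity
  -- S antitone in L
  have hSanti : ∀ k : ℕ, ∀ a b : ℝ, 9600 ≤ a → a ≤ b → S k b ≤ S k a := by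
    intro k a b ha hab
    have ha0 : (0 : ℝ) < a := by linarith
    have hb0 : (0 : ℝ) < b := by linarith
    rw [hS, hS]
    apply Finset.sum_le_sum
    intro s hs
    rw [Finset.mem_Icc] at hs
    have hz : b ^ ((1 : ℤ) - (s : ℤ)) ≤ a ^ ((1 : ℤ) - (s : ℤ)) := by
      rw [zpow_sub₀ ha0.ne', zpow_sub₀ hb0.ne']
      simp only [zpow_one, zpow_natCast]
      rw [div_le_div_iff₀ (by positivity) (by positivity)]
      calc b * a ^ s = b * a * a ^ (s - 1) := by
            rw [mul_assoc, ← pow_succ']; congr 2; omega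
        _ ≤ a * b * b ^ (s - 1) := by
            have : a ^ (s - 1) ≤ b ^ (s - 1) := pow_le_pow_left₀ ha0.le hab _
            have hba : b * a = a * b := by ring
            rw [hba]
            exact mul_le_mul_of_nonneg_left this (by positivity)
        _ = a * b ^ s := by
            rw [mul_assoc, ← pow_succ']; congr 2; omega
    gcongr
  refine ⟨9600, by norm_num, ?_, ?_, ?_⟩
  · intro L hL
    exact ⟨8 * C / L, by rintro x ⟨k, rfl⟩; exact hkey k L hL⟩
  · intro a ha b _ hab
    have ha' : (9600 : ℝ) ≤ a := ha
    rw [hγ, hγ]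
    have hbdd : BddAbove (Set.range fun k : ℕ => S k a) :=
      ⟨8 * C / a, by rintro x ⟨k, rfl⟩; exact hkey k a ha'⟩
    exact ciSup_le fun k => (hSanti k a b ha' hab).trans (le_ciSup hbdd k)
  · have hub : ∀ L : ℝ, 9600 ≤ L → γ L ≤ 8 * C / L := by
      intro L hL
      rw [hγ]
      exact ciSup_le fun k => hkey k L hL
    have hlb : ∀ L : ℝ, 9600 ≤ L → 0 ≤ γ L := by
      intro L hL
      rw [hγ]
      have hbdd : BddAbove (Set.range fun k : ℕ => S k L) :=
        ⟨8 * C / L, by rintro x ⟨k, rfl⟩; exact hkey k L hL⟩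
      exact (hSnn 0 L (by linarith)).trans (le_ciSup hbdd 0)
    have hd : Tendsto (fun L : ℝ => 8 * C / L) atTop (nhds 0) := by
      simpa [div_eq_mul_inv] using tendsto_inv_atTop_zero.const_mul (8 * C)
    apply tendsto_of_tendsto_of_tendsto_of_le_of_le' tendsto_const_nhds hd
    · filter_upwards [eventually_ge_atTop (9600 : ℝ)] with L hL using hlb L hL
    · filter_upwards [eventually_ge_atTop (9600 : ℝ)] with L hL using hub L hL
end
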